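/- Closure of the extended generator family under the pre-Lie operation (from the proof of Proposition exp01). Let F be the set of operators consisting of all z^γ·D^(𝐧) with [γ] ≥ 0 and |γ| > |𝐧| (𝐧 ∈ ℕ² arbitrary, including 0), together with all z^{e_𝐦}·D^(𝐧) with 𝐦, 𝐧 ∈ ℕ², 𝐦 ≥ 𝐧 componentwise and 𝐦 ≠ 𝐧. Then for every D₁ ∈ F and every D₂ = z^{γ₂}·D^(𝐧₂) ∈ F, the operator (D₁(z^{γ₂}))·D^(𝐧₂) (multiplication by the polynomial D₁(z^{γ₂}) composed with D^(𝐧₂)) lies in the ℝ-linear span of F. -/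

import Mathlib

open MvPolynomial

abbrev N2 : Type := {p : ℕ × ℕ // p ≠ (0, 0)}
abbrev Idx : Type := ℕ ⊕ N2
abbrev MIdx : Type := Idx →₀ ℕ
abbrev PS : Type := MvPowerSeries Idx ℝ

noncomputable section

/-- the weight `|𝐧| = w₁ n₁ + w₂ n₂` of `𝐧 ∈ ℕ²`. -/
def wt (w₁ w₂ : ℝ) (n : ℕ × ℕ) : ℝ := w₁ * n.1 + w₂ * n.2

/-- `[γ] = Σ_k k γ(k) − Σ_{𝐧≠0} γ(𝐧)`. -/
def brk (γ : MIdx) : ℤ :=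
  γ.sum fun i n =>
    match i with
    | Sum.inl k => (k : ℤ) * n
    | Sum.inr _ => -(n : ℤ)

/-- `Σ_{𝐦≠0} |𝐦| γ(𝐦)`. -/
def wsum (w₁ w₂ : ℝ) (γ : MIdx) : ℝ :=
  γ.sum fun i n =>
    match i with
    | Sum.inl _ => 0
    | Sum.inr m => wt w₁ w₂ m.1 * n

/-- the homogeneity `|γ| = α([γ]+1) + Σ_{𝐧≠0}|𝐧|γ(𝐧)`. -/
def homdeg (α w₁ w₂ : ℝ) (γ : MIdx) : ℝ := α * ((brk γ : ℝ) + 1) + wsum w₁ w₂ γ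

/-! ### operators on monomials (polynomial level) -/

/-- `D^(0) z^γ = Σ_k (k+1) γ(k) z^{γ - e_k + e_{k+1}}`. -/
def D0mono (γ : MIdx) : MvPolynomial Idx ℝ :=
  γ.sum fun i n =>
    match i with
    | Sum.inl k =>
        (((k + 1) * n : ℕ) : ℝ) •
          monomial (γ - Finsupp.single (Sum.inl k) 1 + Finsupp.single (Sum.inl (k + 1)) 1) 1
    | Sum.inr _ => 0

/-- `D^(𝐧) z^γ = ∂_{z_𝐧} z^γ` for `𝐧 ≠ 0`. -/
def DNmono (m : N2) (γ : MIdx) : MvPolynomial Idx ℝ :=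
  ((γ (Sum.inr m) : ℕ) : ℝ) • monomial (γ - Finsupp.single (Sum.inr m) 1) 1

/-- `D^(𝐧) z^γ` for arbitrary `𝐧 ∈ ℕ²`. -/
def Dmono (n : ℕ × ℕ) (γ : MIdx) : MvPolynomial Idx ℝ :=
  if h : n = (0, 0) then D0mono γ else DNmono ⟨n, h⟩ γ

lemma add10_ne (n : ℕ × ℕ) : n + (1, 0) ≠ (0, 0) := by
  intro h
  exact Nat.succ_ne_zero n.1 (congrArg Prod.fst h)

lemma add01_ne (n : ℕ × ℕ) : n + (0, 1) ≠ (0, 0) := by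
  intro h
  exact Nat.succ_ne_zero n.2 (congrArg Prod.snd h)

def v10 : N2 := ⟨(1, 0), by decide⟩
def v01 : N2 := ⟨(0, 1), by decide⟩

/-- `∂₁ z^γ = z_{(1,0)} D^(0) z^γ + Σ_{𝐧≠0} (n₁+1) z_{𝐧+(1,0)} ∂_{z_𝐧} z^γ`. -/
def d1mono (γ : MIdx) : MvPolynomial Idx ℝ :=
  X (Sum.inr v10) * D0mono γ +
    γ.sum fun i n =>
      match i with
      | Sum.inl _ => 0
      | Sum.inr m =>
          (((m.1.1 + 1) * n : ℕ) : ℝ) •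
            monomial
              (γ - Finsupp.single (Sum.inr m) 1 +
                Finsupp.single (Sum.inr ⟨m.1 + (1, 0), add10_ne m.1⟩) 1) 1

/-- `∂₂ z^γ`. -/
def d2mono (γ : MIdx) : MvPolynomial Idx ℝ :=
  X (Sum.inr v01) * D0mono γ +
    γ.sum fun i n =>
      match i with
      | Sum.inl _ => 0
      | Sum.inr m =>
          (((m.1.2 + 1) * n : ℕ) : ℝ) •
            monomial
              (γ - Finsupp.single (Sum.inr m) 1 +
                Finsupp.single (Sum.inr ⟨m.1 + (0, 1), add01_ne m.1⟩) 1) 1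

/-! ### operators on power series (coefficientwise) -/

/-- coefficient of `D^(0) f` at `β`. -/
def D0coeff (f : PS) (β : MIdx) : ℝ :=
  ∑ i ∈ β.support,
    match i with
    | Sum.inl (k + 1) =>
        (((k + 1) * (β (Sum.inl k) + 1) : ℕ) : ℝ) *
          MvPowerSeries.coeff (R := ℝ)
            (β + Finsupp.single (Sum.inl k) 1 - Finsupp.single (Sum.inl (k + 1)) 1) f
    | _ => 0

/-- `D^(0)` on power series. -/
def D0series (f : PS) : PS := D0coeff f

/-- `D^(𝐧) = ∂_{z_𝐧}` on power series, `𝐧 ≠ 0`. -/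
def DNseries (m : N2) (f : PS) : PS :=
  fun β => ((β (Sum.inr m) + 1 : ℕ) : ℝ) *
    MvPowerSeries.coeff (R := ℝ) (β + Finsupp.single (Sum.inr m) 1) f

/-- `D^(𝐧)` on power series for arbitrary `𝐧 ∈ ℕ²`. -/
def Dseries (n : ℕ × ℕ) (f : PS) : PS :=
  if h : n = (0, 0) then D0series f else DNseries ⟨n, h⟩ f

/-- coefficient of `∂₁ f` at `β`. -/
def d1coeff (f : PS) (β : MIdx) : ℝ :=
  (if 1 ≤ β (Sum.inr v10) then D0coeff f (β - Finsupp.single (Sum.inr v10) 1) else 0) +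
    ∑ i ∈ β.support,
      match i with
      | Sum.inl _ => 0
      | Sum.inr p =>
          if hp : ((p.1.1 - 1, p.1.2) : ℕ × ℕ) ≠ (0, 0) ∧ 1 ≤ p.1.1 then
            (p.1.1 : ℝ) *
              ((((β - Finsupp.single (Sum.inr p) 1 : MIdx) (Sum.inr ⟨(p.1.1 - 1, p.1.2), hp.1⟩) : ℕ) + 1 : ℕ) : ℝ) *
              MvPowerSeries.coeff (R := ℝ)
                (β - Finsupp.single (Sum.inr p) 1 +
                  Finsupp.single (Sum.inr ⟨(p.1.1 - 1, p.1.2), hp.1⟩) 1) f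
          else 0

/-- `∂₁` on power series. -/
def d1series (f : PS) : PS := d1coeff f

/-- coefficient of `∂₂ f` at `β`. -/
def d2coeff (f : PS) (β : MIdx) : ℝ :=
  (if 1 ≤ β (Sum.inr v01) then D0coeff f (β - Finsupp.single (Sum.inr v01) 1) else 0) +
    ∑ i ∈ β.support,
      match i with
      | Sum.inl _ => 0
      | Sum.inr p =>
          if hp : ((p.1.1, p.1.2 - 1) : ℕ × ℕ) ≠ (0, 0) ∧ 1 ≤ p.1.2 then
            (p.1.2 : ℝ) *
              ((((β - Finsupp.single (Sum.inr p) 1 : MIdx) (Sum.inr ⟨(p.1.1, p.1.2 - 1), hp.1⟩) : ℕ) + 1 : ℕ) : ℝ) *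
              MvPowerSeries.coeff (R := ℝ)
                (β - Finsupp.single (Sum.inr p) 1 +
                  Finsupp.single (Sum.inr ⟨(p.1.1, p.1.2 - 1), hp.1⟩) 1) f
          else 0

/-- `∂₂` on power series. -/
def d2series (f : PS) : PS := d2coeff f

/-- the operator `z^γ·D^(𝐧)` on power series. -/
def opOf (γ : MIdx) (n : ℕ × ℕ) (f : PS) : PS :=
  MvPowerSeries.monomial (R := ℝ) γ 1 * Dseries n f

/-- the dual model space `T̃*`. -/
def Ttilde : Set PS := {f | ∀ γ : MIdx, MvPowerSeries.coeff (R := ℝ) γ f ≠ 0 → 0 ≤ brk γ}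

/-- the dual model space `T*`. -/
def Tstar : Set PS :=
  {f | ∀ γ : MIdx, MvPowerSeries.coeff (R := ℝ) γ f ≠ 0 →
      0 ≤ brk γ ∨ ∃ m : N2, γ = Finsupp.single (Sum.inr m) 1}

/-! ### topology and the realization property -/

instance : TopologicalSpace PS := inferInstanceAs (TopologicalSpace ((Idx →₀ ℕ) → ℝ))

/-- `Γ` realizes the family `(π^(𝐧))_{𝐧∈ℕ²}`. -/
def Realizes (Γ : PS →ₐ[ℝ] PS) (π : ℕ × ℕ → PS) : Prop :=
  Continuous Γ ∧
    (∀ m : N2, Γ (MvPowerSeries.X (Sum.inr m)) = MvPowerSeries.X (Sum.inr m) + π m.1) ∧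
    (∀ k : ℕ, HasSum
      (fun l : ℕ => ((k + l).choose k : ℝ) • (π (0, 0) ^ l * MvPowerSeries.X (Sum.inl (k + l))))
      (Γ (MvPowerSeries.X (Sum.inl k))))

end

/-- the extended generator family. -/
def Fam16 (α w₁ w₂ : ℝ) : Set (PS → PS) :=
  {T | ∃ (γ : MIdx) (n : ℕ × ℕ), 0 ≤ brk γ ∧ wt w₁ w₂ n < homdeg α w₁ w₂ γ ∧ T = opOf γ n}
    ∪ {T | ∃ (m n : ℕ × ℕ) (hm : m ≠ (0, 0)), n.1 ≤ m.1 ∧ n.2 ≤ m.2 ∧ m ≠ n ∧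
        T = opOf (Finsupp.single (Sum.inr ⟨m, hm⟩) 1) n}

/-!
Write `D₁ = z^γ₁ D^(𝐧₁)`. The series `D^(𝐧₁) z^γ₂` is a finite combination of monomials `z^β`,
each obtained from `γ₂` by moving one unit from some `z_k` to `z_{k+1}` (if `𝐧₁ = 0`) or by
removing one `z_𝐧₁`; in both cases `[β] = [γ₂] + 1` and `|β| = |γ₂| + α - |𝐧₁|`. Every member of
the family, including `z^{e_𝐦} D^(𝐧)` with `𝐧 < 𝐦`, has `[γ₁] ≥ -1` and `|γ₁| > |𝐧₁|`, so if `D₂`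
is of the first kind then `[γ₁ + β] ≥ 0` and `|γ₁ + β| = (|γ₁| - |𝐧₁|) + |γ₂| > |𝐧₂|`. If
`D₂ = z^{e_𝐦} D^(𝐧₂)`, only `𝐧₁ = 𝐦` contributes, leaving `z^γ₁ D^(𝐧₂)` with `𝐧₂ < 𝐧₁`, and the
family is closed under lowering `𝐧`. Recovering `γ₂, 𝐧₂` from the operator `z^γ₂ D^(𝐧₂)` uses
the test series `z_𝐦` and `z_0`.
-/

open Finsupp

theorem MvPowerSeries.sum_monomial_coeff {σ R : Type*} [CommSemiring R] (f : MvPowerSeries σ R)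
    (s : Finset (σ →₀ ℕ)) (hs : ∀ β ∉ s, MvPowerSeries.coeff β f = 0) :
    ∑ β ∈ s, MvPowerSeries.monomial β (MvPowerSeries.coeff β f) = f := by
  classical
  ext β
  rw [map_sum, Finset.sum_eq_single β
    (fun b _ hb => by simp [MvPowerSeries.coeff_monomial, Ne.symm hb])
    (fun hβ => by simp [hs β hβ])]
  simp

theorem MvPowerSeries.monomial_one_injective {σ R : Type*} [CommSemiring R] [Nontrivial R] :
    Function.Injective fun n : σ →₀ ℕ => MvPowerSeries.monomial (R := R) n 1 := by
  classical
  intro a b h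
  simpa [MvPowerSeries.coeff_monomial, eq_comm] using congrArg (MvPowerSeries.coeff a) h

theorem MvPowerSeries.monomial_one_ne_zero {σ R : Type*} [CommSemiring R] [Nontrivial R]
    (n : σ →₀ ℕ) : MvPowerSeries.monomial (R := R) n 1 ≠ 0 := by
  classical
  intro h
  simpa [MvPowerSeries.coeff_monomial] using congrArg (MvPowerSeries.coeff n) h

lemma brk_add (γ δ : MIdx) : brk (γ + δ) = brk γ + brk δ := by
  unfold brk
  refine Finsupp.sum_add_index' (fun i => by cases i <;> simp) (fun i a b => ?_)
  cases i <;> push_cast <;> ring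

lemma wsum_add (w₁ w₂ : ℝ) (γ δ : MIdx) : wsum w₁ w₂ (γ + δ) = wsum w₁ w₂ γ + wsum w₁ w₂ δ := by
  unfold wsum
  refine Finsupp.sum_add_index' (fun i => by cases i <;> simp) (fun i a b => ?_)
  cases i <;> push_cast <;> ring

@[simp] lemma brk_single_inl (k n : ℕ) : brk (single (Sum.inl k) n) = k * n := by
  simp [brk]

@[simp] lemma brk_single_inr (m : N2) (n : ℕ) : brk (single (Sum.inr m) n) = -n := by
  simp [brk]

@[simp] lemma wsum_single_inl (w₁ w₂ : ℝ) (k n : ℕ) : wsum w₁ w₂ (single (Sum.inl k) n) = 0 := by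
  simp [wsum]

@[simp] lemma wsum_single_inr (w₁ w₂ : ℝ) (m : N2) (n : ℕ) :
    wsum w₁ w₂ (single (Sum.inr m) n) = wt w₁ w₂ m.1 * n := by
  simp [wsum]

lemma homdeg_add (α w₁ w₂ : ℝ) (γ δ : MIdx) :
    homdeg α w₁ w₂ (γ + δ) = homdeg α w₁ w₂ γ + homdeg α w₁ w₂ δ - α := by
  simp only [homdeg, brk_add, wsum_add]
  push_cast
  ring

lemma homdeg_single_inl (α w₁ w₂ : ℝ) (k : ℕ) :
    homdeg α w₁ w₂ (single (Sum.inl k) 1) = α * (k + 1) := by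
  simp [homdeg]

lemma homdeg_single_inr (α w₁ w₂ : ℝ) (m : N2) :
    homdeg α w₁ w₂ (single (Sum.inr m) 1) = wt w₁ w₂ m.1 := by
  simp [homdeg]

lemma wt_strictMono {w₁ w₂ : ℝ} (hw₁ : 0 < w₁) (hw₂ : 0 < w₂) : StrictMono (wt w₁ w₂) := by
  rintro ⟨a₁, a₂⟩ ⟨b₁, b₂⟩ hab
  simp only [wt]
  rcases Prod.lt_iff.mp hab with ⟨h₁, h₂⟩ | ⟨h₁, h₂⟩
  · have : (a₁ : ℝ) < b₁ := by exact_mod_cast h₁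
    have : (a₂ : ℝ) ≤ b₂ := by exact_mod_cast h₂
    nlinarith
  · have : (a₁ : ℝ) ≤ b₁ := by exact_mod_cast h₁
    have : (a₂ : ℝ) < b₂ := by exact_mod_cast h₂
    nlinarith

lemma coeff_D0series (f : PS) (β : MIdx) :
    MvPowerSeries.coeff β (D0series f) = D0coeff f β := rfl

lemma coeff_DNseries (m : N2) (f : PS) (β : MIdx) :
    MvPowerSeries.coeff β (DNseries m f) =
      ((β (Sum.inr m) + 1 : ℕ) : ℝ) * MvPowerSeries.coeff (β + single (Sum.inr m) 1) f := rfl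

lemma coeff_D0series_monomial_ne_zero {γ β : MIdx}
    (h : MvPowerSeries.coeff (R := ℝ) β (D0series (MvPowerSeries.monomial γ 1)) ≠ 0) :
    ∃ k, γ (Sum.inl k) ≠ 0 ∧ β + single (Sum.inl k) 1 = γ + single (Sum.inl (k + 1)) 1 := by
  obtain ⟨(_ | k) | p, hi, hne⟩ := Finset.exists_ne_zero_of_sum_ne_zero h
  · exact absurd rfl hne
  · have hβ : β + single (Sum.inl k) 1 - single (Sum.inl (k + 1)) 1 = γ := by
      by_contra hc
      simp [MvPowerSeries.coeff_monomial, hc] at hne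
    have hle : single (Sum.inl (k + 1)) 1 ≤ β + single (Sum.inl k) 1 :=
      (single_le_iff.mpr (Nat.one_le_iff_ne_zero.mpr (mem_support_iff.mp hi))).trans le_self_add
    have heq : β + single (Sum.inl k) 1 = γ + single (Sum.inl (k + 1)) 1 := by
      rw [← hβ, tsub_add_cancel_of_le hle]
    have hk : β (Sum.inl k) + 1 = γ (Sum.inl k) := by
      simpa using congrArg (· (Sum.inl k)) heq
    exact ⟨k, by omega, heq⟩
  · exact absurd rfl hne

lemma coeff_DNseries_monomial_ne_zero {m : N2} {γ β : MIdx}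
    (h : MvPowerSeries.coeff (R := ℝ) β (DNseries m (MvPowerSeries.monomial γ 1)) ≠ 0) :
    β + single (Sum.inr m) 1 = γ := by
  by_contra hc
  simp [coeff_DNseries, MvPowerSeries.coeff_monomial, hc] at h

lemma coeff_Dseries_monomial_ne_zero {n : ℕ × ℕ} {γ β : MIdx}
    (h : MvPowerSeries.coeff (R := ℝ) β (Dseries n (MvPowerSeries.monomial γ 1)) ≠ 0) :
    (n = (0, 0) ∧ ∃ k, γ (Sum.inl k) ≠ 0 ∧
        β + single (Sum.inl k) 1 = γ + single (Sum.inl (k + 1)) 1) ∨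
      ∃ hn : n ≠ (0, 0), β + single (Sum.inr ⟨n, hn⟩) 1 = γ := by
  unfold Dseries at h
  split_ifs at h with hn
  · exact .inl ⟨hn, coeff_D0series_monomial_ne_zero h⟩
  · exact .inr ⟨hn, coeff_DNseries_monomial_ne_zero h⟩

lemma finite_setOf_coeff_Dseries_monomial_ne_zero (n : ℕ × ℕ) (γ : MIdx) :
    {β | MvPowerSeries.coeff (R := ℝ) β (Dseries n (MvPowerSeries.monomial γ 1)) ≠ 0}.Finite := by
  refine (((γ.support.finite_toSet.preimage Sum.inl_injective.injOn).image
    fun k => γ + single (Sum.inl (k + 1)) 1 - single (Sum.inl k) 1).union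
      (Set.finite_Iic γ)).subset ?_
  intro β hβ
  rcases coeff_Dseries_monomial_ne_zero hβ with ⟨-, k, hk, hβγ⟩ | ⟨_, hβγ⟩
  · exact .inl ⟨k, mem_support_iff.mpr hk, (eq_tsub_of_add_eq hβγ).symm⟩
  · exact .inr (Set.mem_Iic.mpr (hβγ ▸ le_self_add))

lemma brk_homdeg_of_coeff_Dseries_ne_zero (α w₁ w₂ : ℝ) {n : ℕ × ℕ} {γ β : MIdx}
    (h : MvPowerSeries.coeff (R := ℝ) β (Dseries n (MvPowerSeries.monomial γ 1)) ≠ 0) :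
    brk β = brk γ + 1 ∧ homdeg α w₁ w₂ β = homdeg α w₁ w₂ γ + α - wt w₁ w₂ n := by
  rcases coeff_Dseries_monomial_ne_zero h with ⟨rfl, k, -, heq⟩ | ⟨hn, heq⟩ <;>
  · have hb := congrArg brk heq
    have hh := congrArg (homdeg α w₁ w₂) heq
    simp only [brk_add, homdeg_add, brk_single_inl, brk_single_inr, homdeg_single_inl,
      homdeg_single_inr, wt] at hb hh ⊢
    push_cast at hb hh ⊢
    constructor <;> linarith

lemma coeff_Dseries_monomial_single_inr_ne_zero {n : ℕ × ℕ} {m : N2} {β : MIdx}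
    (h : MvPowerSeries.coeff (R := ℝ) β
      (Dseries n (MvPowerSeries.monomial (single (Sum.inr m) 1) 1)) ≠ 0) :
    β = 0 ∧ n = m.1 := by
  rcases coeff_Dseries_monomial_ne_zero h with ⟨-, k, hk, -⟩ | ⟨hn, heq⟩
  · simp at hk
  · have hm : (⟨n, hn⟩ : N2) = m := by
      by_contra hne
      have := congrArg (· (Sum.inr ⟨n, hn⟩)) heq
      simp [Ne.symm hne] at this
    subst hm
    exact ⟨add_eq_right.mp heq, rfl⟩

lemma Dseries_monomial_single_inr (n : ℕ × ℕ) (m : N2) :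
    Dseries n (MvPowerSeries.monomial (R := ℝ) (single (Sum.inr m) 1) 1) =
      if n = m.1 then 1 else 0 := by
  split_ifs with hnm
  · obtain ⟨m, hm⟩ := m
    subst hnm
    ext β
    rw [Dseries, dif_neg hm, coeff_DNseries, MvPowerSeries.coeff_monomial, MvPowerSeries.coeff_one]
    split_ifs <;> simp_all
  · ext β
    by_contra h
    exact hnm (coeff_Dseries_monomial_single_inr_ne_zero (by simpa using h)).2

lemma D0series_monomial_single_inl_zero :
    D0series (MvPowerSeries.monomial (R := ℝ) (single (Sum.inl 0) 1) 1) =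
      MvPowerSeries.monomial (single (Sum.inl 1) 1) 1 := by
  ext β
  by_cases hβ : β = single (Sum.inl 1) 1
  · subst hβ
    simp [coeff_D0series, D0coeff, MvPowerSeries.coeff_monomial]
  · rw [MvPowerSeries.coeff_monomial, if_neg hβ]
    by_contra h
    obtain ⟨k, hk, heq⟩ := coeff_D0series_monomial_ne_zero h
    obtain rfl : 0 = k := by simpa [single_apply] using hk
    exact hβ (add_right_cancel (heq.trans (add_comm _ _)))

lemma opOf_monomial_single_inr (γ : MIdx) (n : ℕ × ℕ) (m : N2) :
    opOf γ n (MvPowerSeries.monomial (single (Sum.inr m) 1) 1) =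
      if n = m.1 then MvPowerSeries.monomial γ 1 else 0 := by
  rw [opOf, Dseries_monomial_single_inr]
  split_ifs <;> simp

theorem opOf_injective2 : Function.Injective2 opOf := by
  intro γ γ' n n' h
  have hX (m : N2) : n = m.1 ↔ n' = m.1 := by
    have := congrFun h (MvPowerSeries.monomial (single (Sum.inr m) 1) 1)
    rw [opOf_monomial_single_inr, opOf_monomial_single_inr] at this
    split_ifs at this <;> simp_all [eq_comm (a := (0 : PS)), MvPowerSeries.monomial_one_ne_zero]
  obtain rfl : n = n' := by
    by_cases hn : n = (0, 0)
    · by_contra hne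
      exact hne ((hX ⟨n', fun h' => hne (hn.trans h'.symm)⟩).mpr rfl)
    · exact ((hX ⟨n, hn⟩).mp rfl).symm
  refine ⟨?_, rfl⟩
  by_cases hn : n = (0, 0)
  · subst hn
    have := congrFun h (MvPowerSeries.monomial (single (Sum.inl 0) 1) 1)
    simp only [opOf, Dseries, dif_pos, D0series_monomial_single_inl_zero,
      MvPowerSeries.monomial_mul_monomial, mul_one] at this
    exact add_right_cancel (MvPowerSeries.monomial_one_injective this)
  · have := congrFun h (MvPowerSeries.monomial (single (Sum.inr ⟨n, hn⟩) 1) 1)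
    rw [opOf_monomial_single_inr, opOf_monomial_single_inr, if_pos rfl, if_pos rfl] at this
    exact MvPowerSeries.monomial_one_injective this

lemma opOf_mem_Fam16_iff {α w₁ w₂ : ℝ} {γ : MIdx} {n : ℕ × ℕ} :
    opOf γ n ∈ Fam16 α w₁ w₂ ↔
      (0 ≤ brk γ ∧ wt w₁ w₂ n < homdeg α w₁ w₂ γ) ∨
        ∃ m : N2, γ = single (Sum.inr m) 1 ∧ n < m.1 := by
  constructor
  · rintro (⟨γ', n', hb, hh, he⟩ | ⟨m, n', hm, h₁, h₂, hne, he⟩)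
    · obtain ⟨rfl, rfl⟩ := opOf_injective2 he
      exact .inl ⟨hb, hh⟩
    · obtain ⟨rfl, rfl⟩ := opOf_injective2 he
      exact .inr ⟨⟨m, hm⟩, rfl, lt_of_le_of_ne ⟨h₁, h₂⟩ (Ne.symm hne)⟩
  · rintro (⟨hb, hh⟩ | ⟨⟨m, hm⟩, rfl, hlt⟩)
    · exact .inl ⟨γ, n, hb, hh, rfl⟩
    · exact .inr ⟨m, n, hm, hlt.le.1, hlt.le.2, hlt.ne', rfl⟩

lemma brk_homdeg_of_opOf_mem_Fam16 {α w₁ w₂ : ℝ} (hw₁ : 0 < w₁) (hw₂ : 0 < w₂) {γ : MIdx}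
    {n : ℕ × ℕ} (h : opOf γ n ∈ Fam16 α w₁ w₂) :
    -1 ≤ brk γ ∧ wt w₁ w₂ n < homdeg α w₁ w₂ γ := by
  rcases opOf_mem_Fam16_iff.mp h with ⟨hb, hh⟩ | ⟨m, rfl, hlt⟩
  · exact ⟨by omega, hh⟩
  · exact ⟨by simp, (homdeg_single_inr α w₁ w₂ m).symm ▸ wt_strictMono hw₁ hw₂ hlt⟩

lemma opOf_mem_Fam16_of_le {α w₁ w₂ : ℝ} (hw₁ : 0 < w₁) (hw₂ : 0 < w₂) {γ : MIdx}
    {n n' : ℕ × ℕ} (h : opOf γ n ∈ Fam16 α w₁ w₂) (hn' : n' ≤ n) : opOf γ n' ∈ Fam16 α w₁ w₂ := by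
  rcases opOf_mem_Fam16_iff.mp h with ⟨hb, hh⟩ | ⟨m, rfl, hlt⟩
  · exact opOf_mem_Fam16_iff.mpr (.inl ⟨hb, ((wt_strictMono hw₁ hw₂).monotone hn').trans_lt hh⟩)
  · exact opOf_mem_Fam16_iff.mpr (.inr ⟨m, rfl, hn'.trans_lt hlt⟩)

lemma opOf_add_mem_Fam16 {α w₁ w₂ : ℝ} (hw₁ : 0 < w₁) (hw₂ : 0 < w₂) {γ₁ γ₂ β : MIdx}
    {n₁ n₂ : ℕ × ℕ} (hD₁ : opOf γ₁ n₁ ∈ Fam16 α w₁ w₂) (hD₂ : opOf γ₂ n₂ ∈ Fam16 α w₁ w₂)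
    (hβ : MvPowerSeries.coeff (R := ℝ) β (Dseries n₁ (MvPowerSeries.monomial γ₂ 1)) ≠ 0) :
    opOf (γ₁ + β) n₂ ∈ Fam16 α w₁ w₂ := by
  obtain ⟨hb₁, hh₁⟩ := brk_homdeg_of_opOf_mem_Fam16 hw₁ hw₂ hD₁
  rcases opOf_mem_Fam16_iff.mp hD₂ with ⟨hb₂, hh₂⟩ | ⟨m, rfl, hlt⟩
  · obtain ⟨hb, hh⟩ := brk_homdeg_of_coeff_Dseries_ne_zero α w₁ w₂ hβ
    refine opOf_mem_Fam16_iff.mpr (.inl ⟨by rw [brk_add]; omega, ?_⟩)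
    rw [homdeg_add, hh]
    linarith
  · obtain ⟨rfl, rfl⟩ := coeff_Dseries_monomial_single_inr_ne_zero hβ
    rw [add_zero]
    exact opOf_mem_Fam16_of_le hw₁ hw₂ hD₁ hlt.le

lemma mul_Dseries_mem_span {S : Set (PS → PS)} {γ : MIdx} {n : ℕ × ℕ} {g : PS}
    (hg : {β | MvPowerSeries.coeff β g ≠ 0}.Finite)
    (hS : ∀ β, MvPowerSeries.coeff β g ≠ 0 → opOf (γ + β) n ∈ S) :
    (fun f => MvPowerSeries.monomial γ 1 * g * Dseries n f) ∈ Submodule.span ℝ S := by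
  have hsum : (fun f => MvPowerSeries.monomial γ 1 * g * Dseries n f) =
      ∑ β ∈ hg.toFinset, MvPowerSeries.coeff β g • opOf (γ + β) n := by
    funext f
    conv_lhs => rw [← MvPowerSeries.sum_monomial_coeff g hg.toFinset (by simp)]
    simp only [opOf, Finset.mul_sum, Finset.sum_mul, MvPowerSeries.monomial_mul_monomial,
      Finset.sum_apply, Pi.smul_apply, one_mul]
    refine Finset.sum_congr rfl fun β _ => ?_
    rw [← smul_mul_assoc, ← map_smul, smul_eq_mul, mul_one]
  rw [hsum]
  exact Submodule.sum_mem _ fun β hβ =>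
    Submodule.smul_mem _ _ (Submodule.subset_span (hS β (hg.mem_toFinset.mp hβ)))

theorem stmt16_general (α w₁ w₂ : ℝ) (hw₁ : 0 < w₁) (hw₂ : 0 < w₂)
    (D₁ : PS → PS) (hD₁ : D₁ ∈ Fam16 α w₁ w₂)
    (γ₂ : MIdx) (n₂ : ℕ × ℕ) (hD₂ : opOf γ₂ n₂ ∈ Fam16 α w₁ w₂) :
    (fun f : PS => D₁ (MvPowerSeries.monomial (R := ℝ) γ₂ 1) * Dseries n₂ f)
      ∈ Submodule.span ℝ (Fam16 α w₁ w₂) := by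
  obtain ⟨γ₁, n₁, rfl⟩ : ∃ γ₁ n₁, D₁ = opOf γ₁ n₁ := by
    rcases hD₁ with ⟨γ₁, n₁, -, -, rfl⟩ | ⟨_, n₁, _, -, -, -, rfl⟩ <;> exact ⟨_, _, rfl⟩
  exact mul_Dseries_mem_span (finite_setOf_coeff_Dseries_monomial_ne_zero n₁ γ₂)
    fun β hβ => opOf_add_mem_Fam16 hw₁ hw₂ hD₁ hD₂ hβ

/-- **Closure of the extended generator family under the pre-Lie operation.** -/
theorem stmt16 (α w₁ w₂ : ℝ) (hα : 0 < α) (hw₁ : 0 < w₁) (hw₂ : 0 < w₂)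
    (D₁ : PS → PS) (hD₁ : D₁ ∈ Fam16 α w₁ w₂)
    (γ₂ : MIdx) (n₂ : ℕ × ℕ) (hD₂ : opOf γ₂ n₂ ∈ Fam16 α w₁ w₂) :
    (fun f : PS => D₁ (MvPowerSeries.monomial (R := ℝ) γ₂ 1) * Dseries n₂ f)
      ∈ Submodule.span ℝ (Fam16 α w₁ w₂) :=
  stmt16_general α w₁ w₂ hw₁ hw₂ D₁ hD₁ γ₂ n₂ hD₂
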